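/- Let P be the free group on one generator and X the free group on two generators, and let M be the crossed module (P ♭ X, P ∗ X, conj, κ), where P ♭ X = ker(π_P : P ∗ X → P) is a normal subgroup of the free product P ∗ X, conj is the conjugation action, and κ is the inclusion. Then M is a projective crossed module of groups, but for every set S there is no isomorphism of crossed modules between M and L(FreeGroup(S)). (Hence the variety of crossed modules of groups is not a Schreier variety: M is projective but not free.) -/

import Mathlib

/-! `B ∗ F(β)` is the semidirect product `F(B × β) ⋊ B`, with `B` translating the first
coordinate, so `B ♭ F(β)` is free on the conjugates `b c b⁻¹`. A morphism of crossed modules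
out of `(B ♭ F(β), B ∗ F(β), conj, κ)` is therefore given by any homomorphism on `B ∗ F(β)`
together with compatible images of the generators `c ∈ β`; when `B` is free both can be lifted
along a surjection, which gives projectivity.

An isomorphism with `L(F(S))` restricts to `F(S) ♭ F(S) ≅ P ♭ X`, hence induces
`F(S) ≅ P` on the quotients as well as `F(S) ∗ F(S) ≅ P ∗ X`. Counting homomorphisms into
`ℤ/2` then gives `2 ^ 2 = 2 ^ 3`. -/

open Function
open scoped Monoid.Coprod

/-- `π_B : B ∗ X →* B`, induced by the identity on `B` and trivial on `X`. -/
def piHom (B X : Type*) [Group B] [Group X] : (B ∗ X) →* B :=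
  Monoid.Coprod.lift (MonoidHom.id B) (1 : X →* B)

/-- `B ♭ X = ker (π_B : B ∗ X →* B)`. -/
def flatSub (B X : Type*) [Group B] [Group X] : Subgroup (B ∗ X) :=
  (piHom B X).ker

instance flatSub_normal (B X : Type*) [Group B] [Group X] : (flatSub B X).Normal :=
  MonoidHom.normal_ker (piHom B X)

/-- `η : H →* H ♭ H`, the corestriction of the second coproduct inclusion. -/
def etaHom (H : Type*) [Group H] : H →* flatSub H H :=
  MonoidHom.codRestrict (Monoid.Coprod.inr : H →* H ∗ H) (flatSub H H)
    (by intro x; simp [flatSub, piHom, MonoidHom.mem_ker])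
/-- `(T, G, φ, d)` is a crossed module of groups. -/
structure IsXMod {T G : Type*} [Group T] [Group G]
    (φ : G →* MulAut T) (d : T →* G) : Prop where
  compat : ∀ (g : G) (t : T), d (φ g t) = g * d t * g⁻¹
  peiffer : ∀ t t' : T, φ (d t) t' = t * t' * t⁻¹

/-- `(fT, fG)` is a morphism of crossed modules from `(T, G, φ, d)` to
`(T', G', φ', d')`. -/
def XModHom {T G T' G' : Type*} [Group T] [Group G] [Group T'] [Group G']
    (φ : G →* MulAut T) (d : T →* G) (φ' : G' →* MulAut T') (d' : T' →* G')
    (fT : T →* T') (fG : G →* G') : Prop :=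
  d'.comp fT = fG.comp d ∧ ∀ (g : G) (t : T), fT (φ g t) = φ' (fG g) (fT t)

/-- A crossed module `(T, G, φ, d)` is projective if every surjective morphism of
crossed modules onto it admits a section that is a morphism of crossed modules. -/
def IsProjXMod {T G : Type*} [Group T] [Group G]
    (φ : G →* MulAut T) (d : T →* G) : Prop :=
  ∀ (T' G' : Type*) [Group T'] [Group G'] (φ' : G' →* MulAut T') (d' : T' →* G'),
    IsXMod φ' d' →
    ∀ (fT : T' →* T) (fG : G' →* G), XModHom φ' d' φ d fT fG →
      Function.Surjective fT → Function.Surjective fG →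
      ∃ (gT : T →* T') (gG : G →* G'), XModHom φ d φ' d' gT gG ∧
        fT.comp gT = MonoidHom.id T ∧ fG.comp gG = MonoidHom.id G

/-- The conjugation action core of the semidirect product `Q ⋊[ψ] P` on `Q`:
`(q, x)` acts by `q' ↦ q * ψ x q' * q⁻¹`. -/
def sdConj {Q P : Type*} [Group Q] [Group P] (ψ : P →* MulAut Q) :
    (Q ⋊[ψ] P) →* MulAut Q :=
  SemidirectProduct.lift (MulAut.conj) ψ (by
    intro x
    ext q q'
    simp [MulAut.conj, mul_assoc])

open Monoid

theorem piHom_surjective (B X : Type*) [Group B] [Group X] : Surjective (piHom B X) :=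
  fun b => ⟨Coprod.inl b, by simp [piHom]⟩

namespace flatSub

variable {B X : Type*} [Group B] [Group X]

theorem inr_mem (x : X) : (Coprod.inr x : B ∗ X) ∈ flatSub B X := by
  simp [flatSub, piHom]

theorem inv_inl_piHom_mul_mem (g : B ∗ X) : (Coprod.inl (piHom B X g))⁻¹ * g ∈ flatSub B X := by
  simp [flatSub, piHom]

noncomputable def quotientEquiv (B X : Type*) [Group B] [Group X] : (B ∗ X) ⧸ flatSub B X ≃* B :=
  QuotientGroup.quotientKerEquivOfSurjective _ (piHom_surjective B X)

end flatSub

section FreeBasis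

variable {B β : Type*} [Group B]

def translateAut : B →* MulAut (FreeGroup (B × β)) where
  toFun b := FreeGroup.freeGroupCongr ((Equiv.mulLeft b).prodCongr (Equiv.refl β))
  map_one' := by ext; simp
  map_mul' b b' := by
    ext x
    induction x using FreeGroup.induction_on <;> simp_all [mul_assoc, Prod.map]

@[simp] theorem translateAut_of (b b' : B) (c : β) :
    translateAut b (FreeGroup.of (b', c)) = FreeGroup.of (b * b', c) := by
  simp [translateAut]

def flatBasis : FreeGroup (B × β) →* flatSub B (FreeGroup β) :=
  FreeGroup.lift fun x =>
    MulAut.conjNormal (Coprod.inl x.1) ⟨_, flatSub.inr_mem (FreeGroup.of x.2)⟩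

theorem flatBasis_of (b : B) (c : β) :
    flatBasis (FreeGroup.of (b, c)) =
      MulAut.conjNormal (Coprod.inl b) ⟨_, flatSub.inr_mem (FreeGroup.of c)⟩ := by
  simp [flatBasis]

theorem coe_flatBasis_of (b : B) (c : β) :
    (flatBasis (FreeGroup.of (b, c)) : B ∗ FreeGroup β) =
      Coprod.inl b * Coprod.inr (FreeGroup.of c) * Coprod.inl b⁻¹ := by
  simp [flatBasis_of, MulAut.conjNormal_apply]

theorem conjNormal_inl_flatBasis_of (b b' : B) (c : β) :
    MulAut.conjNormal (Coprod.inl b) (flatBasis (FreeGroup.of (b', c))) =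
      flatBasis (FreeGroup.of (b * b', c)) := by
  rw [flatBasis_of, flatBasis_of, ← MulAut.mul_apply, ← map_mul, ← map_mul]

def coprodToSemidirect : B ∗ FreeGroup β →* FreeGroup (B × β) ⋊[translateAut] B :=
  Coprod.lift SemidirectProduct.inr
    (SemidirectProduct.inl.comp (FreeGroup.lift fun c => FreeGroup.of (1, c)))

theorem right_coprodToSemidirect (g : B ∗ FreeGroup β) :
    (coprodToSemidirect g).right = piHom B (FreeGroup β) g := by
  induction g using Coprod.induction_on with
  | inl b => simp [coprodToSemidirect, piHom]
  | inr x => simp [coprodToSemidirect, piHom]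
  | mul g h hg hh => simp [hg, hh]

def flatRetract : flatSub B (FreeGroup β) →* FreeGroup (B × β) where
  toFun n := (coprodToSemidirect (n : B ∗ FreeGroup β)).left
  map_one' := by simp
  map_mul' n n' := by
    have hn : piHom B (FreeGroup β) n = 1 := n.2
    simp [SemidirectProduct.mul_left, right_coprodToSemidirect, hn]

def semidirectToCoprod : FreeGroup (B × β) ⋊[translateAut] B →* B ∗ FreeGroup β :=
  SemidirectProduct.lift ((flatSub B (FreeGroup β)).subtype.comp flatBasis) Coprod.inl <| by
    intro b
    ext ⟨b', c⟩
    simp [coe_flatBasis_of, mul_assoc]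

theorem semidirectToCoprod_coprodToSemidirect (g : B ∗ FreeGroup β) :
    semidirectToCoprod (coprodToSemidirect g) = g := by
  induction g using Coprod.induction_on with
  | inl b => simp [semidirectToCoprod, coprodToSemidirect]
  | inr x =>
    induction x using FreeGroup.induction_on with
    | C1 => simp
    | of c => simp [semidirectToCoprod, coprodToSemidirect, coe_flatBasis_of]
    | inv_of c hc => simpa using hc
    | mul x y hx hy => simpa using congr($hx * $hy)
  | mul g h hg hh => simp [hg, hh]

theorem flatRetract_flatBasis (x : FreeGroup (B × β)) : flatRetract (flatBasis x) = x := by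
  induction x using FreeGroup.induction_on with
  | C1 => simp
  | of x =>
    obtain ⟨b, c⟩ := x
    simp [flatRetract, coprodToSemidirect, coe_flatBasis_of, SemidirectProduct.mul_left]
  | inv_of x hx => simpa using hx
  | mul x y hx hy => simp [hx, hy]

theorem flatBasis_flatRetract (n : flatSub B (FreeGroup β)) : flatBasis (flatRetract n) = n := by
  have hn : piHom B (FreeGroup β) n = 1 := n.2
  have h : coprodToSemidirect (n : B ∗ FreeGroup β) = SemidirectProduct.inl (flatRetract n) := by
    ext
    · rfl
    · simp [right_coprodToSemidirect, hn]
  ext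
  simpa [h, semidirectToCoprod] using semidirectToCoprod_coprodToSemidirect (n : B ∗ FreeGroup β)

def flatBasisEquiv : FreeGroup (B × β) ≃* flatSub B (FreeGroup β) :=
  { flatBasis with
    invFun := flatRetract
    left_inv := flatRetract_flatBasis
    right_inv := flatBasis_flatRetract }

theorem flatSub.hom_ext {Z : Type*} [Group Z] {f g : flatSub B (FreeGroup β) →* Z}
    (h : ∀ b c, f (flatBasis (FreeGroup.of (b, c))) = g (flatBasis (FreeGroup.of (b, c)))) :
    f = g := by
  have hfg : f.comp flatBasis = g.comp flatBasis := FreeGroup.ext_hom _ _ fun x => h x.1 x.2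
  ext n
  obtain ⟨x, rfl⟩ := flatBasisEquiv.surjective n
  exact DFunLike.congr_fun hfg x

end FreeBasis

section ConjNormal

variable {G T' G' : Type*} [Group G] [Group T'] [Group G'] {N : Subgroup G} [N.Normal]
  {φ' : G' →* MulAut T'} {d' : T' →* G'} {fT : N →* T'} {fG : G →* G'}

theorem map_conjNormal_coe (hX : IsXMod φ' d') (hc : d'.comp fT = fG.comp N.subtype) (m n : N) :
    fT (MulAut.conjNormal (m : G) n) = φ' (fG m) (fT n) := by
  have hconj : MulAut.conjNormal (m : G) n = m * n * m⁻¹ := by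
    ext
    simp [MulAut.conjNormal_apply]
  rw [hconj, map_mul, map_mul, map_inv, ← hX.peiffer]
  exact congr(φ' $(DFunLike.congr_fun hc m) (fT n))

theorem xModHom_conjNormal_of_forall_coset (hX : IsXMod φ' d')
    (hc : d'.comp fT = fG.comp N.subtype) (H : Set G) (hH : ∀ g : G, ∃ h ∈ H, h⁻¹ * g ∈ N)
    (hconj : ∀ h ∈ H, ∀ n, fT (MulAut.conjNormal h n) = φ' (fG h) (fT n)) :
    XModHom MulAut.conjNormal N.subtype φ' d' fT fG := by
  refine ⟨hc, fun g n => ?_⟩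
  obtain ⟨h, hH, hm⟩ := hH g
  obtain ⟨m, rfl⟩ : ∃ m : N, g = h * m := ⟨⟨_, hm⟩, by simp⟩
  rw [map_mul, MulAut.mul_apply, hconj h hH, map_mul, map_mul, MulAut.mul_apply,
    map_conjNormal_coe hX hc m]

end ConjNormal

section FlatLift

variable {B β T' G' : Type*} [Group B] [Group T'] [Group G']
  {φ' : G' →* MulAut T'} {d' : T' →* G'}

def flatLift (φ' : G' →* MulAut T') (gG : B ∗ FreeGroup β →* G') (t : β → T') :
    flatSub B (FreeGroup β) →* T' :=
  (FreeGroup.lift fun x => φ' (gG (Coprod.inl x.1)) (t x.2)).comp flatRetract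

theorem flatLift_flatBasis_of (gG : B ∗ FreeGroup β →* G') (t : β → T') (b : B) (c : β) :
    flatLift φ' gG t (flatBasis (FreeGroup.of (b, c))) = φ' (gG (Coprod.inl b)) (t c) := by
  simp [flatLift, flatRetract_flatBasis]

theorem xModHom_flatLift (hX : IsXMod φ' d') {gG : B ∗ FreeGroup β →* G'} {t : β → T'}
    (ht : ∀ c, d' (t c) = gG (Coprod.inr (FreeGroup.of c))) :
    XModHom MulAut.conjNormal (flatSub B (FreeGroup β)).subtype φ' d' (flatLift φ' gG t) gG := by
  have hc : d'.comp (flatLift φ' gG t) = gG.comp (flatSub B (FreeGroup β)).subtype :=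
    flatSub.hom_ext fun b c => by
      simp [flatLift_flatBasis_of, hX.compat, ht, coe_flatBasis_of]
  refine xModHom_conjNormal_of_forall_coset hX hc (Set.range Coprod.inl)
    (fun g => ⟨_, Set.mem_range_self _, flatSub.inv_inl_piHom_mul_mem g⟩) ?_
  rintro _ ⟨b, rfl⟩ n
  refine DFunLike.congr_fun (flatSub.hom_ext (f := (flatLift φ' gG t).comp
    (MulAut.conjNormal (Coprod.inl b)).toMonoidHom) (g := (φ' (gG (Coprod.inl b))).toMonoidHom.comp
    (flatLift φ' gG t)) fun b' c => ?_) n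
  simp [conjNormal_inl_flatBasis_of, flatLift_flatBasis_of]

end FlatLift

theorem isProjXMod_flatSub_freeGroup (α β : Type*) :
    IsProjXMod (MulAut.conjNormal : FreeGroup α ∗ FreeGroup β →* MulAut (flatSub _ _))
      (flatSub (FreeGroup α) (FreeGroup β)).subtype := by
  intro T' G' _ _ φ' d' hX fT fG ⟨hc, hequiv⟩ hsT hsG
  choose u hu using fun a => hsG (Coprod.inl (FreeGroup.of a))
  choose t ht using fun c => hsT ⟨_, flatSub.inr_mem (B := FreeGroup α) (FreeGroup.of c)⟩
  let gG : FreeGroup α ∗ FreeGroup β →* G' :=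
    Coprod.lift (FreeGroup.lift u) (FreeGroup.lift (d' ∘ t))
  have hsectG : fG.comp gG = MonoidHom.id _ := by
    refine Coprod.hom_ext (FreeGroup.ext_hom _ _ fun a => by simp [gG, hu])
      (FreeGroup.ext_hom _ _ fun c => ?_)
    simpa [gG, ht] using (DFunLike.congr_fun hc (t c)).symm
  refine ⟨flatLift φ' gG t, gG, xModHom_flatLift hX fun c => by simp [gG], ?_, hsectG⟩
  refine flatSub.hom_ext fun b c => ?_
  rw [MonoidHom.comp_apply, flatLift_flatBasis_of, hequiv, ht, flatBasis_of]
  exact congr(MulAut.conjNormal ($hsectG (Coprod.inl b)) _)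

theorem Nat.card_monoidHom_freeGroup (α G : Type*) [Finite α] [Group G] :
    Nat.card (FreeGroup α →* G) = Nat.card G ^ Nat.card α := by
  rw [Nat.card_congr FreeGroup.lift.symm, Nat.card_fun]

theorem Nat.card_monoidHom_coprod (M N P : Type*) [Monoid M] [Monoid N] [Monoid P] :
    Nat.card (M ∗ N →* P) = Nat.card (M →* P) * Nat.card (N →* P) := by
  rw [← Nat.card_prod]
  exact Nat.card_congr Coprod.liftEquiv.symm

theorem FreeGroup.card_eq_of_mulEquiv_coprod {S α β : Type*} [Finite α] [Finite β]
    (e₁ : FreeGroup S ≃* FreeGroup α)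
    (e₂ : FreeGroup S ∗ FreeGroup S ≃* FreeGroup α ∗ FreeGroup β) :
    Nat.card α = Nat.card β := by
  let C := Multiplicative (ZMod 2)
  have hC : Nat.card C = 2 := by simp [C]
  have h₁ : Nat.card (FreeGroup S →* C) = 2 ^ Nat.card α := by
    rw [Nat.card_congr e₁.monoidHomCongrLeftEquiv, Nat.card_monoidHom_freeGroup, hC]
  have h₂ := Nat.card_congr (e₂.monoidHomCongrLeftEquiv (N := C))
  rw [Nat.card_monoidHom_coprod, Nat.card_monoidHom_coprod, h₁, Nat.card_monoidHom_freeGroup,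
    Nat.card_monoidHom_freeGroup, hC, ← pow_add, ← pow_add] at h₂
  have := Nat.pow_right_injective le_rfl h₂
  omega

theorem Subgroup.map_eq_of_comp_subtype {G G' : Type*} [Group G] [Group G'] {N : Subgroup G}
    {N' : Subgroup G'} {fT : N →* N'} {fG : G →* G'} (hc : N'.subtype.comp fT = fG.comp N.subtype)
    (hT : Surjective fT) : N.map fG = N' := by
  ext g'
  constructor
  · rintro ⟨g, hg, rfl⟩
    simpa using congr(($hc ⟨g, hg⟩ : G')) ▸ (fT ⟨g, hg⟩).2
  · intro hg'
    obtain ⟨n, hn⟩ := hT ⟨g', hg'⟩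
    exact ⟨n, n.2, by simpa [hn] using congr($hc n).symm⟩

/-- Let `P` be the free group on one generator, `X` the free group on two generators,
and `M = (P ♭ X, P ∗ X, conj, κ)`.  Then `M` is a projective crossed module of groups,
but it is not isomorphic to any free crossed module `L(FreeGroup S)`; hence the variety
of crossed modules of groups is not a Schreier variety. -/
theorem xmod_projective_not_free :
    IsProjXMod
      (MulAut.conjNormal :
        (FreeGroup Unit ∗ FreeGroup Bool) →* MulAut (flatSub (FreeGroup Unit) (FreeGroup Bool)))
      (flatSub (FreeGroup Unit) (FreeGroup Bool)).subtype ∧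
    ∀ (S : Type*),
      ¬ ∃ (fT : flatSub (FreeGroup S) (FreeGroup S) →*
            flatSub (FreeGroup Unit) (FreeGroup Bool))
          (fG : (FreeGroup S ∗ FreeGroup S) →* (FreeGroup Unit ∗ FreeGroup Bool)),
        XModHom
          (MulAut.conjNormal :
            (FreeGroup S ∗ FreeGroup S) →* MulAut (flatSub (FreeGroup S) (FreeGroup S)))
          (flatSub (FreeGroup S) (FreeGroup S)).subtype
          (MulAut.conjNormal :
            (FreeGroup Unit ∗ FreeGroup Bool) →*
              MulAut (flatSub (FreeGroup Unit) (FreeGroup Bool)))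
          (flatSub (FreeGroup Unit) (FreeGroup Bool)).subtype fT fG ∧
        Bijective fT ∧ Bijective fG := by
  refine ⟨isProjXMod_flatSub_freeGroup Unit Bool, fun S => ?_⟩
  rintro ⟨fT, fG, ⟨hc, -⟩, hT, hG⟩
  let eG := MulEquiv.ofBijective fG hG
  let eB : FreeGroup S ≃* FreeGroup Unit := (flatSub.quotientEquiv _ _).symm.trans <|
    (QuotientGroup.congr _ _ eG (Subgroup.map_eq_of_comp_subtype hc hT.2)).trans
      (flatSub.quotientEquiv _ _)
  simpa using FreeGroup.card_eq_of_mulEquiv_coprod eB eG
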